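/- Let V be a finite Borel measure on (0,∞) with tail V̄(x):=V((x,∞))>0 for all x>0, such that the function z ↦ V̄(log z) is slowly varying at infinity (regularly varying with index 0). Then ∫_{(0,log z)} e^x V(dx) = o(z·V̄(log z)) as z→∞. -/
import Mathlib


open MeasureTheory Filter Set
open scoped ENNReal NNReal

noncomputable section

set_option maxHeartbeats 1000000

/-- Tail of the measure after a logarithmic change of variables. -/
def lV (V : Measure ℝ) (z : ℝ) : ℝ := (V (Set.Ioi (Real.log z))).toReal

/-- The truncated exponential integral. -/
def jV (V : Measure ℝ) (z : ℝ) : ℝ :=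
  (∫⁻ x in Set.Ioo (0 : ℝ) (Real.log z), ENNReal.ofReal (Real.exp x) ∂V).toReal

lemma lV_nonneg (V : Measure ℝ) (z : ℝ) : 0 ≤ lV V z := ENNReal.toReal_nonneg
lemma jV_nonneg (V : Measure ℝ) (z : ℝ) : 0 ≤ jV V z := ENNReal.toReal_nonneg

lemma lV_anti (V : Measure ℝ) [IsFiniteMeasure V] {a b : ℝ} (ha : 0 < a) (hab : a ≤ b) :
    lV V b ≤ lV V a := by
  apply ENNReal.toReal_mono (measure_ne_top V _)
  exact measure_mono (Set.Ioi_subset_Ioi (Real.log_le_log ha hab))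

lemma lV_pos (V : Measure ℝ) [IsFiniteMeasure V]
    (htail : ∀ x : ℝ, 0 < x → 0 < V (Set.Ioi x)) {z : ℝ} (hz : 1 < z) : 0 < lV V z :=
  ENNReal.toReal_pos (htail _ (Real.log_pos hz)).ne' (measure_ne_top V _)

lemma lintegral_exp_le (V : Measure ℝ) (z : ℝ) :
    (∫⁻ x in Set.Ioo (0 : ℝ) (Real.log z), ENNReal.ofReal (Real.exp x) ∂V)
      ≤ ENNReal.ofReal (Real.exp (Real.log z)) * V (Set.Ioo (0 : ℝ) (Real.log z)) := by
  rw [← setLIntegral_const]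
  exact setLIntegral_mono measurable_const
    (fun x hx => ENNReal.ofReal_le_ofReal (Real.exp_le_exp.2 hx.2.le))

lemma lintegral_exp_ne_top (V : Measure ℝ) [IsFiniteMeasure V] (z : ℝ) :
    (∫⁻ x in Set.Ioo (0 : ℝ) (Real.log z), ENNReal.ofReal (Real.exp x) ∂V) ≠ ⊤ :=
  ((lintegral_exp_le V z).trans_lt
    (ENNReal.mul_lt_top ENNReal.ofReal_lt_top (measure_lt_top _ _))).ne

lemma jV_le (V : Measure ℝ) [IsFiniteMeasure V] {z : ℝ} (hz : 0 < z) :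
    jV V z ≤ z * (V Set.univ).toReal := by
  have h1 : (∫⁻ x in Set.Ioo (0 : ℝ) (Real.log z), ENNReal.ofReal (Real.exp x) ∂V)
      ≤ ENNReal.ofReal z * V Set.univ := by
    refine (lintegral_exp_le V z).trans ?_
    rw [Real.exp_log hz]
    exact mul_le_mul_right (measure_mono (Set.subset_univ _)) _
  calc jV V z ≤ (ENNReal.ofReal z * V Set.univ).toReal :=
        ENNReal.toReal_mono (ENNReal.mul_ne_top ENNReal.ofReal_ne_top (measure_ne_top V _)) h1
    _ = z * (V Set.univ).toReal := by
        rw [ENNReal.toReal_mul, ENNReal.toReal_ofReal hz.le]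

lemma step (V : Measure ℝ) [IsFiniteMeasure V] {z : ℝ} (hz : 4 ≤ z) :
    jV V z ≤ z * (lV V (z / 4) - lV V z) + jV V (z / 2) := by
  have hz0 : (0:ℝ) < z := by linarith
  set a : ℝ := Real.log (z / 2)
  set b : ℝ := Real.log z
  set a' : ℝ := Real.log (z / 4)
  have ha'a : a' < a := Real.log_lt_log (by linarith) (by linarith)
  have hab : a < b := Real.log_lt_log (by linarith) (by linarith)
  have hsub : Set.Ioo (0:ℝ) b ⊆ Set.Ioo (0:ℝ) a ∪ Set.Ico a b := by
    intro x hx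
    rcases lt_or_ge x a with h | h
    · exact Or.inl ⟨hx.1, h⟩
    · exact Or.inr ⟨h, hx.2⟩
  have hsplit : (∫⁻ x in Set.Ioo (0:ℝ) b, ENNReal.ofReal (Real.exp x) ∂V)
      ≤ (∫⁻ x in Set.Ioo (0:ℝ) a, ENNReal.ofReal (Real.exp x) ∂V)
        + (∫⁻ x in Set.Ico a b, ENNReal.ofReal (Real.exp x) ∂V) :=
    (lintegral_mono_set hsub).trans (lintegral_union_le _ _ _)
  have hIco : (∫⁻ x in Set.Ico a b, ENNReal.ofReal (Real.exp x) ∂V)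
      ≤ ENNReal.ofReal z * V (Set.Ico a b) := by
    rw [← setLIntegral_const]
    refine setLIntegral_mono measurable_const (fun x hx => ENNReal.ofReal_le_ofReal ?_)
    calc Real.exp x ≤ Real.exp b := Real.exp_le_exp.2 hx.2.le
      _ = z := Real.exp_log hz0
  have hmeas : V (Set.Ico a b) + V (Set.Ioi b) ≤ V (Set.Ioi a') := by
    have hdisj : Disjoint (Set.Ico a b) (Set.Ioi b) :=
      Set.disjoint_left.2 (fun x hx hx' => absurd hx.2 (not_lt.2 hx'.le))
    have hu : Set.Ico a b ∪ Set.Ioi b ⊆ Set.Ioi a' := by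
      intro x hx
      rcases hx with hx | hx
      · exact lt_of_lt_of_le ha'a hx.1
      · exact lt_trans (ha'a.trans hab) hx
    calc V (Set.Ico a b) + V (Set.Ioi b) = V (Set.Ico a b ∪ Set.Ioi b) :=
          (measure_union hdisj measurableSet_Ioi).symm
      _ ≤ V (Set.Ioi a') := measure_mono hu
  have hmeasR : (V (Set.Ico a b)).toReal ≤ lV V (z / 4) - lV V z := by
    have := ENNReal.toReal_mono (measure_ne_top V _) hmeas
    rw [ENNReal.toReal_add (measure_ne_top V _) (measure_ne_top V _)] at this
    simp only [lV]
    linarith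
  have hIcoR : (∫⁻ x in Set.Ico a b, ENNReal.ofReal (Real.exp x) ∂V).toReal
      ≤ z * (lV V (z / 4) - lV V z) := by
    calc (∫⁻ x in Set.Ico a b, ENNReal.ofReal (Real.exp x) ∂V).toReal
        ≤ (ENNReal.ofReal z * V (Set.Ico a b)).toReal :=
          ENNReal.toReal_mono (ENNReal.mul_ne_top ENNReal.ofReal_ne_top (measure_ne_top V _)) hIco
      _ = z * (V (Set.Ico a b)).toReal := by
          rw [ENNReal.toReal_mul, ENNReal.toReal_ofReal hz0.le]
      _ ≤ z * (lV V (z / 4) - lV V z) := mul_le_mul_of_nonneg_left hmeasR hz0.le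
  have hIco_ne : (∫⁻ x in Set.Ico a b, ENNReal.ofReal (Real.exp x) ∂V) ≠ ⊤ :=
    (hIco.trans_lt (ENNReal.mul_lt_top ENNReal.ofReal_lt_top (measure_lt_top _ _))).ne
  calc jV V z ≤ ((∫⁻ x in Set.Ioo (0:ℝ) a, ENNReal.ofReal (Real.exp x) ∂V)
        + (∫⁻ x in Set.Ico a b, ENNReal.ofReal (Real.exp x) ∂V)).toReal :=
        ENNReal.toReal_mono (ENNReal.add_ne_top.2 ⟨lintegral_exp_ne_top V _, hIco_ne⟩) hsplit
    _ = jV V (z / 2) + (∫⁻ x in Set.Ico a b, ENNReal.ofReal (Real.exp x) ∂V).toReal := by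
        rw [ENNReal.toReal_add (lintegral_exp_ne_top V _) hIco_ne]; rfl
    _ ≤ z * (lV V (z / 4) - lV V z) + jV V (z / 2) := by linarith

lemma chainL (V : Measure ℝ) {ε W : ℝ} (hε : 0 ≤ ε) (hW : 1 ≤ W)
    (hchain : ∀ w : ℝ, W ≤ w → lV V (w / 2) ≤ (1 + ε) * lV V w) :
    ∀ (n : ℕ) (z : ℝ), W ≤ z / 2 ^ n → lV V (z / 2 ^ n) ≤ (1 + ε) ^ n * lV V z := by
  intro n
  induction n with
  | zero => intro z hz; simp
  | succ n ih =>
    intro z hz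
    have h2n : (0:ℝ) < 2 ^ n := by positivity
    have h2n1 : (0:ℝ) < 2 ^ (n+1) := by positivity
    have hzpos : 0 < z := by
      have h := lt_of_lt_of_le zero_lt_one (hW.trans hz)
      have : z = z / 2 ^ (n+1) * 2 ^ (n+1) := by field_simp
      rw [this]; exact mul_pos h h2n1
    have hle : z / 2 ^ (n+1) ≤ z / 2 ^ n := by
      apply div_le_div_of_nonneg_left hzpos.le h2n
      exact pow_le_pow_right₀ (by norm_num) (Nat.le_succ n)
    have hWn : W ≤ z / 2 ^ n := hz.trans hle
    have heq : z / 2 ^ (n+1) = (z / 2 ^ n) / 2 := by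
      rw [div_div, pow_succ]
    calc lV V (z / 2 ^ (n+1)) = lV V ((z / 2 ^ n) / 2) := by rw [heq]
      _ ≤ (1 + ε) * lV V (z / 2 ^ n) := hchain _ hWn
      _ ≤ (1 + ε) * ((1 + ε) ^ n * lV V z) :=
          mul_le_mul_of_nonneg_left (ih z hWn) (by linarith)
      _ = (1 + ε) ^ (n+1) * lV V z := by ring

lemma chainJ (V : Measure ℝ) {ε W : ℝ} (hε : 0 ≤ ε) (hW : 1 ≤ W)
    (hstep : ∀ w : ℝ, W ≤ w → jV V w ≤ ε * (w * lV V w) + jV V (w / 2))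
    (hchain : ∀ w : ℝ, W ≤ w → lV V (w / 2) ≤ (1 + ε) * lV V w) :
    ∀ (n : ℕ) (z : ℝ), W ≤ z / 2 ^ n →
      jV V z ≤ ε * (∑ k ∈ Finset.range n, ((1 + ε) / 2) ^ k) * (z * lV V z) + jV V (z / 2 ^ n) := by
  intro n
  induction n with
  | zero => intro z hz; simp
  | succ n ih =>
    intro z hz
    have h2n1 : (0:ℝ) < 2 ^ (n+1) := by positivity
    have hzpos : 0 < z := by
      have h := lt_of_lt_of_le zero_lt_one (hW.trans hz)
      have : z = z / 2 ^ (n+1) * 2 ^ (n+1) := by field_simp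
      rw [this]; exact mul_pos h h2n1
    have hzW : W ≤ z := by
      refine hz.trans ?_
      rw [div_le_iff₀ h2n1]
      nlinarith [one_le_pow₀ (show (1:ℝ) ≤ 2 by norm_num) (n := n+1)]
    have hz2 : W ≤ (z / 2) / 2 ^ n := by
      rw [div_div, mul_comm, ← pow_succ]; exact hz
    have h1 := hstep z hzW
    have h2 := ih (z / 2) hz2
    have h3 : lV V (z / 2) ≤ (1 + ε) * lV V z := hchain z hzW
    have heq : (z / 2) / 2 ^ n = z / 2 ^ (n+1) := by
      rw [div_div, mul_comm, ← pow_succ]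
    rw [heq] at h2
    have hsum : ∑ k ∈ Finset.range (n+1), ((1 + ε) / 2) ^ k
        = (1 + ε) / 2 * ∑ k ∈ Finset.range n, ((1 + ε) / 2) ^ k + 1 := geom_sum_succ
    have hsnn : 0 ≤ ∑ k ∈ Finset.range n, ((1 + ε) / 2) ^ k :=
      Finset.sum_nonneg (fun k _ => by positivity)
    have key : z / 2 * lV V (z / 2) ≤ (1 + ε) / 2 * (z * lV V z) := by
      have := mul_le_mul_of_nonneg_left h3 (by linarith : (0:ℝ) ≤ z / 2)
      calc z / 2 * lV V (z / 2) ≤ z / 2 * ((1 + ε) * lV V z) := this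
        _ = (1 + ε) / 2 * (z * lV V z) := by ring
    have h2' : jV V (z / 2) ≤ ε * ((1 + ε) / 2 * ∑ k ∈ Finset.range n, ((1 + ε) / 2) ^ k)
        * (z * lV V z) + jV V (z / 2 ^ (n+1)) := by
      calc jV V (z / 2) ≤ ε * (∑ k ∈ Finset.range n, ((1 + ε) / 2) ^ k) * (z / 2 * lV V (z / 2))
            + jV V (z / 2 ^ (n+1)) := by linarith
        _ ≤ ε * (∑ k ∈ Finset.range n, ((1 + ε) / 2) ^ k) * ((1 + ε) / 2 * (z * lV V z))
            + jV V (z / 2 ^ (n+1)) := by nlinarith [key, mul_nonneg hε hsnn]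
        _ = ε * ((1 + ε) / 2 * ∑ k ∈ Finset.range n, ((1 + ε) / 2) ^ k) * (z * lV V z)
            + jV V (z / 2 ^ (n+1)) := by ring
    rw [hsum]
    calc jV V z ≤ ε * (z * lV V z) + jV V (z / 2) := h1
      _ ≤ ε * (z * lV V z) + (ε * ((1 + ε) / 2 * ∑ k ∈ Finset.range n, ((1 + ε) / 2) ^ k)
          * (z * lV V z) + jV V (z / 2 ^ (n+1))) := by linarith
      _ = ε * ((1 + ε) / 2 * ∑ k ∈ Finset.range n, ((1 + ε) / 2) ^ k + 1) * (z * lV V z)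
          + jV V (z / 2 ^ (n+1)) := by ring

lemma exists_n {W z : ℝ} (hW : 0 < W) (hz : W ≤ z) :
    ∃ n : ℕ, W ≤ z / 2 ^ n ∧ z / 2 ^ n < 2 * W := by
  have hzpos : 0 < z := lt_of_lt_of_le hW hz
  have hex : ∃ n : ℕ, z < 2 ^ n * W := by
    obtain ⟨n, hn⟩ := pow_unbounded_of_one_lt (z / W) (show (1:ℝ) < 2 by norm_num)
    exact ⟨n, by rwa [div_lt_iff₀ hW] at hn⟩
  classical
  have hfind := Nat.find_spec hex
  have hn₀pos : 0 < Nat.find hex := by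
    rcases Nat.eq_zero_or_pos (Nat.find hex) with h | h
    · exfalso; rw [h] at hfind; simp at hfind; linarith
    · exact h
  have hmin := Nat.find_min hex (Nat.sub_lt hn₀pos one_pos)
  push_neg at hmin
  have hsucc : Nat.find hex - 1 + 1 = Nat.find hex := Nat.succ_pred_eq_of_pos hn₀pos
  refine ⟨Nat.find hex - 1, ?_, ?_⟩
  · rw [le_div_iff₀ (by positivity)]
    calc W * 2 ^ (Nat.find hex - 1) = 2 ^ (Nat.find hex - 1) * W := by ring
      _ ≤ z := hmin
  · rw [div_lt_iff₀ (by positivity)]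
    calc z < 2 ^ Nat.find hex * W := hfind
      _ = 2 * W * 2 ^ (Nat.find hex - 1) := by
          conv_lhs => rw [← hsucc]
          rw [pow_succ]; ring

lemma geom_sum_bound {q : ℝ} (h0 : 0 ≤ q) (h1 : q < 1) (n : ℕ) :
    ∑ k ∈ Finset.range n, q ^ k ≤ 1 / (1 - q) := by
  rw [geom_sum_eq (ne_of_lt h1)]
  have he : (q ^ n - 1) / (q - 1) = (1 - q ^ n) / (1 - q) := by
    rw [← neg_div_neg_eq]; ring_nf
  rw [he, div_le_div_iff₀ (by linarith) (by linarith)]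
  have : 0 ≤ q ^ n := pow_nonneg h0 n
  nlinarith


/-- If `V` is a finite measure on `(0,∞)` with everywhere positive tail `V̄` such that
`z ↦ V̄(log z)` is slowly varying at infinity, then
`∫_{(0, log z)} e^x V(dx) = o(z V̄(log z))` as `z → ∞`. -/
theorem exp_integral_littleO_slowly_varying
    (V : Measure ℝ) [IsFiniteMeasure V]
    (hsupp : V (Set.Iic 0) = 0)
    (htail : ∀ x : ℝ, 0 < x → 0 < V (Set.Ioi x))
    (hSV : ∀ l : ℝ, 0 < l →
      Tendsto (fun z : ℝ =>
          (V (Set.Ioi (Real.log (l * z)))).toReal / (V (Set.Ioi (Real.log z))).toReal)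
        atTop (nhds 1)) :
    Tendsto (fun z : ℝ =>
        (∫⁻ x in Set.Ioo (0 : ℝ) (Real.log z), ENNReal.ofReal (Real.exp x) ∂V).toReal /
          (z * (V (Set.Ioi (Real.log z))).toReal))
      atTop (nhds 0) := by
  show Tendsto (fun z : ℝ => jV V z / (z * lV V z)) atTop (nhds 0)
  rw [Metric.tendsto_atTop]
  intro ε₀ hε₀
  -- choose ε and q
  set ε : ℝ := min (ε₀ / 6) (1 / 3) with hεdef
  have hε0 : 0 < ε := lt_min (by linarith) (by norm_num)
  have hε3 : ε ≤ 1 / 3 := min_le_right _ _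
  have hε6 : ε ≤ ε₀ / 6 := min_le_left _ _
  set q : ℝ := (1 + ε) / 2 with hqdef
  have hq0 : 0 < q := by rw [hqdef]; linarith
  have hq23 : q ≤ 2 / 3 := by rw [hqdef]; linarith
  have hq1 : q < 1 := by linarith
  -- eventual hypotheses
  have ev1 : ∀ᶠ z : ℝ in atTop,
      (V (Set.Ioi (Real.log ((1/4) * z)))).toReal / lV V z < 1 + ε :=
    (hSV (1/4) (by norm_num)).eventually_lt_const (by linarith)
  have ev2 : ∀ᶠ z : ℝ in atTop,
      (V (Set.Ioi (Real.log ((1/2) * z)))).toReal / lV V z < 1 + ε :=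
    (hSV (1/2) (by norm_num)).eventually_lt_const (by linarith)
  obtain ⟨W₀, hW₀⟩ := (ev1.and ev2).exists_forall_of_atTop
  set W : ℝ := max W₀ 4 with hWdef
  have hW4 : (4:ℝ) ≤ W := le_max_right _ _
  have hW1 : (1:ℝ) ≤ W := by linarith
  have hW0 : (0:ℝ) < W := by linarith
  -- chain and step hypotheses
  have hchain : ∀ w : ℝ, W ≤ w → lV V (w / 2) ≤ (1 + ε) * lV V w := by
    intro w hw
    have hw4 : (4:ℝ) ≤ w := hW4.trans hw
    have hlpos : 0 < lV V w := lV_pos V htail (by linarith)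
    have h := (hW₀ w ((le_max_left _ _).trans hw)).2
    rw [div_lt_iff₀ hlpos] at h
    have : (1/2 : ℝ) * w = w / 2 := by ring
    rw [this] at h
    exact h.le
  have hstep : ∀ w : ℝ, W ≤ w → jV V w ≤ ε * (w * lV V w) + jV V (w / 2) := by
    intro w hw
    have hw4 : (4:ℝ) ≤ w := hW4.trans hw
    have hlpos : 0 < lV V w := lV_pos V htail (by linarith)
    have h := (hW₀ w ((le_max_left _ _).trans hw)).1
    rw [div_lt_iff₀ hlpos] at h
    have heq : (1/4 : ℝ) * w = w / 4 := by ring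
    rw [heq] at h
    have h4 : lV V (w / 4) ≤ (1 + ε) * lV V w := h.le
    have hs := step V hw4
    have : w * (lV V (w / 4) - lV V w) ≤ ε * (w * lV V w) := by nlinarith
    linarith
  -- constants
  set C : ℝ := (V Set.univ).toReal with hCdef
  have hC0 : 0 < C := by
    have h2 : 0 < lV V 2 := lV_pos V htail (by norm_num)
    have : lV V 2 ≤ C := ENNReal.toReal_mono (measure_ne_top V _) (measure_mono (Set.subset_univ _))
    linarith
  set E : ℝ := W * lV V (2 * W) with hEdef
  have hL2W : 0 < lV V (2 * W) := lV_pos V htail (by linarith)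
  have hE0 : 0 < E := mul_pos hW0 hL2W
  set D : ℝ := 2 * W * C with hDdef
  have hD0 : 0 < D := by positivity
  obtain ⟨m, hm⟩ := exists_pow_lt_of_lt_one (show 0 < ε₀ * E / (2 * D) by positivity) hq1
  have hm' : q ^ m * (2 * D) < ε₀ * E := by
    rw [lt_div_iff₀ (by positivity)] at hm
    linarith
  refine ⟨2 ^ (m + 1) * W, fun z hz => ?_⟩
  have h2m1 : (1:ℝ) ≤ 2 ^ (m+1) := one_le_pow₀ (by norm_num)
  have hzW : W ≤ z := by nlinarith
  have hz8 : (4:ℝ) ≤ z := hW4.trans hzW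
  obtain ⟨n, hn1, hn2⟩ := exists_n hW0 hzW
  -- n ≥ m
  have h2n : (0:ℝ) < 2 ^ n := by positivity
  have hzn : z < 2 ^ (n+1) * W := by
    rw [div_lt_iff₀ h2n] at hn2
    calc z < 2 * W * 2 ^ n := hn2
      _ = 2 ^ (n+1) * W := by rw [pow_succ]; ring
  have hmn : m ≤ n := by
    by_contra hcon
    push_neg at hcon
    have : n + 1 ≤ m + 1 := by omega
    have hle : (2:ℝ) ^ (n+1) ≤ 2 ^ (m+1) := pow_le_pow_right₀ (by norm_num) this
    nlinarith
  -- apply the chains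
  have hJ := chainJ V hε0.le hW1 hstep hchain n z hn1
  have hL := chainL V hε0.le hW1 hchain n z hn1
  have hsum : ∑ k ∈ Finset.range n, q ^ k ≤ 3 := by
    refine (geom_sum_bound hq0.le hq1 n).trans ?_
    rw [div_le_iff₀ (by linarith)]
    linarith
  have hPz : 0 < z := by linarith
  have hlz : 0 < lV V z := lV_pos V htail (by linarith)
  have hP : 0 < z * lV V z := mul_pos hPz hlz
  -- upper bound on jV
  have hjtail : jV V (z / 2 ^ n) ≤ D := by
    have h1 : jV V (z / 2 ^ n) ≤ (z / 2 ^ n) * C := jV_le V (by positivity)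
    have h2 : (z / 2 ^ n) * C ≤ 2 * W * C :=
      mul_le_mul_of_nonneg_right hn2.le hC0.le
    rw [hDdef]; linarith
  have hjup : jV V z ≤ ε₀ / 2 * (z * lV V z) + D := by
    have h1 : ε * (∑ k ∈ Finset.range n, q ^ k) ≤ ε₀ / 2 := by
      calc ε * (∑ k ∈ Finset.range n, q ^ k) ≤ ε * 3 :=
            mul_le_mul_of_nonneg_left hsum hε0.le
        _ ≤ ε₀ / 2 := by linarith
    have h2 : ε * (∑ k ∈ Finset.range n, q ^ k) * (z * lV V z) ≤ ε₀ / 2 * (z * lV V z) :=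
      mul_le_mul_of_nonneg_right h1 hP.le
    calc jV V z ≤ ε * (∑ k ∈ Finset.range n, q ^ k) * (z * lV V z) + jV V (z / 2 ^ n) := hJ
      _ ≤ ε₀ / 2 * (z * lV V z) + D := by linarith
  -- lower bound on z * lV V z
  have hlow : E ≤ q ^ n * (z * lV V z) := by
    have h1 : lV V (2 * W) ≤ lV V (z / 2 ^ n) := lV_anti V (by positivity) hn2.le
    have h2 : lV V (2 * W) ≤ (1 + ε) ^ n * lV V z := h1.trans hL
    have h3 : 2 ^ n * W ≤ z := by
      rw [le_div_iff₀ h2n] at hn1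
      linarith
    have hq2 : q ^ n * 2 ^ n = (1 + ε) ^ n := by
      rw [hqdef, div_pow, div_mul_cancel₀ _ (ne_of_gt h2n)]
    have hA : E ≤ (1 + ε) ^ n * lV V z * W := by
      have := mul_le_mul_of_nonneg_left h2 hW0.le
      rw [hEdef]; nlinarith
    have hB : (1 + ε) ^ n * lV V z * W = q ^ n * (2 ^ n * W) * lV V z := by
      rw [← hq2]; ring
    have hCC : q ^ n * (2 ^ n * W) * lV V z ≤ q ^ n * z * lV V z := by
      refine mul_le_mul_of_nonneg_right ?_ hlz.le
      exact mul_le_mul_of_nonneg_left h3 (pow_pos hq0 n).le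
    calc E ≤ (1 + ε) ^ n * lV V z * W := hA
      _ = q ^ n * (2 ^ n * W) * lV V z := hB
      _ ≤ q ^ n * z * lV V z := hCC
      _ = q ^ n * (z * lV V z) := by ring
  have hlowm : E ≤ q ^ m * (z * lV V z) := by
    have : q ^ n ≤ q ^ m := pow_le_pow_of_le_one hq0.le hq1.le hmn
    calc E ≤ q ^ n * (z * lV V z) := hlow
      _ ≤ q ^ m * (z * lV V z) := mul_le_mul_of_nonneg_right this hP.le
  -- conclude
  have hfnn : 0 ≤ jV V z / (z * lV V z) := div_nonneg (jV_nonneg V z) hP.le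
  rw [Real.dist_eq, sub_zero, abs_of_nonneg hfnn]
  rw [div_lt_iff₀ hP]
  -- from hlowm and hm' : D < ε₀/2 * (z * lV V z)
  have hqm0 : 0 < q ^ m := pow_pos hq0 m
  have hkey : 2 * D < ε₀ * (z * lV V z) := by
    have h1 : ε₀ * E ≤ ε₀ * (q ^ m * (z * lV V z)) :=
      mul_le_mul_of_nonneg_left hlowm hε₀.le
    have h2 : q ^ m * (2 * D) < q ^ m * (ε₀ * (z * lV V z)) := by
      calc q ^ m * (2 * D) < ε₀ * E := hm'
        _ ≤ ε₀ * (q ^ m * (z * lV V z)) := h1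
        _ = q ^ m * (ε₀ * (z * lV V z)) := by ring
    exact lt_of_mul_lt_mul_left h2 hqm0.le
  nlinarith


end
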